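/- The only generalized Mersenne numbers M_{3,n} = 3ⁿ − 2 (n a positive integer) that are perfect squares are 1 and 25, attained at n = 1 and n = 3. -/

import Mathlib

/-!
For even `n`, `x ^ 2 + 2 = 3 ^ n` is impossible modulo 4. For odd `n = 2m + 1` it says that
`(x, 3 ^ m)` solves `x ^ 2 + 2 = 3 y ^ 2`, whose solutions in `ℕ` are exactly the orbit of `(1, 1)`
under `(x, y) ↦ (2x + 3y, x + 2y)`. Modulo `153 = 9 * 17` this orbit has period 18, and in it
`9 ∣ y` forces `17 ∣ y`; hence `9 ∤ 3 ^ m`, i.e. `m ≤ 1`.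
-/

def pellStep {R : Type*} [Semiring R] (p : R × R) : R × R :=
  (2 * p.1 + 3 * p.2, p.1 + 2 * p.2)

theorem map_pellStep_iterate {R S : Type*} [Semiring R] [Semiring S] (f : R →+* S) (k : ℕ)
    (p : R × R) : Prod.map f f (pellStep^[k] p) = pellStep^[k] (Prod.map f f p) :=
  Function.Semiconj.iterate_right (fun q => by simp [pellStep, map_ofNat f]) k p

theorem exists_pellStep_iterate_eq (x y : ℕ) (h : x ^ 2 + 2 = 3 * y ^ 2) :
    ∃ k, pellStep^[k] (1, 1) = (x, y) := by
  induction y using Nat.strong_induction_on generalizing x with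
  | _ y ih =>
    obtain hy | hy : y ≤ 1 ∨ 2 ≤ y := by omega
    · have hy1 : y = 1 := by interval_cases y <;> omega
      subst hy1
      have hx : x = 1 := by nlinarith
      exact ⟨0, by simp [hx]⟩
    · have h3y : 3 * y ≤ 2 * x := by nlinarith
      have hx2 : x ≤ 2 * y := by nlinarith
      have hyx : y < x := by nlinarith
      -- `(2x - 3y, 2y - x)` is the preimage of `(x, y)`: a smaller solution
      obtain ⟨k, hk⟩ := ih (2 * y - x) (by omega) (2 * x - 3 * y) (by
        zify [h3y, hx2] at h ⊢; nlinarith)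
      refine ⟨k + 1, ?_⟩
      rw [Function.iterate_succ_apply', hk, pellStep, Prod.mk.injEq]
      omega

theorem isPeriodicPt_pellStep_zmod_153 :
    Function.IsPeriodicPt (pellStep (R := ZMod 153)) 18 (1, 1) := by
  decide

theorem seventeen_dvd_of_nine_dvd_pellStep_iterate (k : ℕ)
    (h : 9 ∣ (pellStep^[k] ((1, 1) : ℕ × ℕ)).2) : 17 ∣ (pellStep^[k] ((1, 1) : ℕ × ℕ)).2 := by
  have orbit : ∀ j < 18, 9 ∣ ((pellStep^[j] ((1, 1) : ZMod 153 × ZMod 153)).2).val →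
      17 ∣ ((pellStep^[j] ((1, 1) : ZMod 153 × ZMod 153)).2).val := by decide
  have hmod := congrArg (fun q => q.2.val)
    (map_pellStep_iterate (Nat.castRingHom (ZMod 153)) k (1, 1))
  simp only [Prod.map, map_one, Nat.coe_castRingHom, ZMod.val_natCast] at hmod
  rw [← isPeriodicPt_pellStep_zmod_153.iterate_mod_apply] at hmod
  have h17 := orbit (k % 18) (Nat.mod_lt _ (by norm_num)) (by rw [← hmod]; omega)
  rw [← hmod] at h17
  omega

theorem sq_add_two_ne_three_pow_of_even (x : ℕ) {n : ℕ} (hn : Even n) : x ^ 2 + 2 ≠ 3 ^ n := by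
  obtain ⟨m, rfl⟩ := hn
  intro h
  have h4 := congrArg (Nat.cast : ℕ → ZMod 4) h
  push_cast at h4
  rw [← two_mul, pow_mul, show (3 : ZMod 4) ^ 2 = 1 by decide, one_pow] at h4
  generalize (x : ZMod 4) = z at h4
  revert z
  decide

theorem stmt11 (n : ℕ) (hn : 0 < n) :
    IsSquare (3 ^ n - 2) ↔ n = 1 ∨ n = 3 := by
  constructor
  · rintro ⟨x, hx⟩
    have hpow : 3 ≤ 3 ^ n := Nat.le_self_pow hn.ne' 3
    have hsol : x ^ 2 + 2 = 3 ^ n := by rw [sq]; omega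
    obtain ⟨m, rfl⟩ := (Nat.even_or_odd n).resolve_left
      (fun he => sq_add_two_ne_three_pow_of_even x he hsol)
    obtain ⟨k, hk⟩ := exists_pellStep_iterate_eq x (3 ^ m) (by rw [hsol]; ring)
    by_contra hm
    have h9 : 9 ∣ 3 ^ m := pow_dvd_pow 3 (by omega : 2 ≤ m)
    have h17 := seventeen_dvd_of_nine_dvd_pellStep_iterate k (by rwa [hk])
    rw [hk] at h17
    exact absurd (Nat.Prime.dvd_of_dvd_pow (by norm_num) h17) (by norm_num)
  · rintro (rfl | rfl)
    · exact ⟨1, rfl⟩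
    · exact ⟨5, rfl⟩
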